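/- Let p be an odd prime, y = ν₁ e_{n₁} + ⋯ + ν_f e_{n_f} ∈ ℤ(p^∞) with n₁ < ⋯ < n_f, nonzero integer coefficients ν_i, l_i = ⌈log_p |ν_i|⌉ and n_i < n_{i+1} − l_{i+1} for each i. If z ∈ ℤ(p^∞) satisfies λ(z) < λ(y), then the order of y + z is at least p^{n_{f−λ(z)} − l_{f−λ(z)}}. -/

import Mathlib

open Filter Topology

noncomputable section

/-- The Prüfer `p`-group, as the subgroup of `ℚ/ℤ` of elements of `p`-power order. -/
def Prufer (p : ℕ) : AddSubgroup (AddCircle (1 : ℚ)) where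
  carrier := {x | ∃ n : ℕ, p ^ n • x = 0}
  zero_mem' := ⟨0, smul_zero _⟩
  add_mem' := by
    rintro a b ⟨m, hm⟩ ⟨n, hn⟩
    refine ⟨m + n, ?_⟩
    have ha : p ^ (m + n) • a = 0 := by
      rw [pow_add, mul_comm, mul_smul, hm, smul_zero]
    have hb : p ^ (m + n) • b = 0 := by
      rw [pow_add, mul_smul, hn, smul_zero]
    rw [smul_add, ha, hb, add_zero]
  neg_mem' := by
    rintro a ⟨n, hn⟩
    exact ⟨n, by rw [smul_neg, hn, neg_zero]⟩

/-- The element `e_n = 1/p^n` of the Prüfer `p`-group. -/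
def eP (p n : ℕ) : Prufer p :=
  ⟨((((p : ℚ) ^ n)⁻¹ : ℚ) : AddCircle (1 : ℚ)), n, by
    rcases eq_or_ne ((p : ℚ) ^ n) 0 with h | h
    · simp [h]
    · have key : ((p ^ n : ℕ) • ((((p : ℚ) ^ n)⁻¹ : ℚ)) : ℚ) = (1 : ℚ) := by
        rw [nsmul_eq_mul]
        push_cast
        field_simp
      calc p ^ n • ((((p : ℚ) ^ n)⁻¹ : ℚ) : AddCircle (1 : ℚ))
          = (((p ^ n : ℕ) • (((p : ℚ) ^ n)⁻¹ : ℚ) : ℚ) : AddCircle (1 : ℚ)) := by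
            norm_cast
        _ = ((1 : ℚ) : AddCircle (1 : ℚ)) := by rw [key]
        _ = 0 := AddCircle.coe_period 1⟩

/-- `{a_k}` is a T-sequence: it converges to `0` in some Hausdorff group topology. -/
def IsTSeq {A : Type*} [AddCommGroup A] (a : ℕ → A) : Prop :=
  ∃ τ : TopologicalSpace A, @IsTopologicalAddGroup A τ _ ∧ @T2Space A τ ∧
    Filter.Tendsto a Filter.atTop (@nhds A τ 0)

/-- The set `A(l,m)` of sums `m₁ a_{k₁} + ⋯ + m_h a_{k_h}` with distinct indices `kᵢ ≥ m`,
nonzero integer coefficients, and `Σ|mᵢ| ≤ l`. -/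
def TSet {A : Type*} [AddCommGroup A] (a : ℕ → A) (l m : ℕ) : Set A :=
  {x | ∃ (s : Finset ℕ) (c : ℕ → ℤ), (∀ k ∈ s, m ≤ k) ∧ (∀ k ∈ s, c k ≠ 0) ∧
    (∑ k ∈ s, (c k).natAbs) ≤ l ∧ x = ∑ k ∈ s, c k • a k}

/-- `σ` is a finitely supported representation `y = Σ_{n ≥ 1} σ_n e_n`. -/
def IsRep (p : ℕ) (y : Prufer p) (σ : ℕ →₀ ℤ) : Prop :=
  σ 0 = 0 ∧ y = ∑ n ∈ σ.support, σ n • eP p n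

/-- `σ` is the canonical form of `y`: a representation with `|σ_n| ≤ (p-1)/2`. -/
def IsCanonical (p : ℕ) (y : Prufer p) (σ : ℕ →₀ ℤ) : Prop :=
  IsRep p y σ ∧ ∀ n, 2 * (σ n).natAbs ≤ p - 1

/-!
The gap condition `n i < n (i + 1) - l (i + 1)` makes the balanced base-`p` expansions of the
`ν j`, written in the windows `[n j - l j, n j]`, pairwise disjoint. Hence the canonical form of
`∑_{i ≤ j < f} ν j e_{n j}` is their concatenation: it has at least `f - i` nonzero digits, all in
positions `≥ N = n i - l i`. Multiplying by `p ^ (N - 1)` kills the terms with `j < i` and moves a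
canonical form down by `N - 1` places, losing only the digits at positions `≤ N - 1`. So if
`p ^ (N - 1) • (y + z) = 0`, uniqueness of canonical forms makes the shifted forms of the two
summands negatives of each other, and with `i = f - λ(z) - 1` this gives `λ(z) ≥ f - i > λ(z)`
(if `λ(z) ≥ f`, then `i = 0` and the digit count is `λ(y)` itself).
-/

open Finset

section

variable {p : ℕ}

lemma eP_zero : eP p 0 = 0 := by
  ext
  simp [eP]

lemma pow_smul_eP (hp : p ≠ 0) {k n : ℕ} (hkn : k ≤ n) : p ^ k • eP p n = eP p (n - k) := by
  ext
  simp only [eP, AddSubgroup.coe_nsmul, ← AddCircle.coe_nsmul, nsmul_eq_mul]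
  congr 1
  rw [← Nat.sub_add_cancel hkn]
  simp [pow_add, hp]

lemma pow_smul_eP_of_le (hp : p ≠ 0) {k n : ℕ} (hnk : n ≤ k) : p ^ k • eP p n = 0 := by
  rw [← Nat.sub_add_cancel hnk, pow_add, mul_smul, pow_smul_eP hp le_rfl, Nat.sub_self, eP_zero,
    smul_zero]

lemma zsmul_eP_eq_zero_iff (hp : p ≠ 0) {c : ℤ} {n : ℕ} : c • eP p n = 0 ↔ (p : ℤ) ^ n ∣ c := by
  rw [← ZeroMemClass.coe_eq_zero, AddSubgroup.coe_zsmul]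
  simp only [eP, ← AddCircle.coe_zsmul, AddCircle.coe_eq_zero_iff, zsmul_eq_mul, mul_one]
  have hpn : ((p : ℚ) ^ n) ≠ 0 := by positivity
  constructor
  · rintro ⟨k, hk⟩
    refine ⟨k, ?_⟩
    have : (c : ℚ) = k * (p : ℚ) ^ n := by rw [hk]; field_simp
    exact_mod_cast this.trans (mul_comm _ _)
  · rintro ⟨k, rfl⟩
    exact ⟨k, by push_cast; field_simp⟩

lemma Prufer.addOrderOf_pos (hp : p ≠ 0) (x : Prufer p) : 0 < addOrderOf x := by
  obtain ⟨K, hK⟩ := x.2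
  have hfin : IsOfFinAddOrder x :=
    isOfFinAddOrder_iff_nsmul_eq_zero.mpr ⟨p ^ K, by positivity, Subtype.ext hK⟩
  exact hfin.addOrderOf_pos

lemma Prufer.pow_succ_le_addOrderOf (hp : p.Prime) {x : Prufer p} {k : ℕ} (hx : p ^ k • x ≠ 0) :
    p ^ (k + 1) ≤ addOrderOf x := by
  obtain ⟨K, hK⟩ := x.2
  have hdvd : addOrderOf x ∣ p ^ K := addOrderOf_dvd_of_nsmul_eq_zero (Subtype.ext hK)
  obtain ⟨e, -, he⟩ := (Nat.dvd_prime_pow hp).mp hdvd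
  have hke : k < e := by
    by_contra! hek
    exact hx (addOrderOf_dvd_iff_nsmul_eq_zero.mp (he ▸ pow_dvd_pow p hek))
  rw [he]
  exact Nat.pow_le_pow_right hp.pos hke

lemma isCanonical_iff {y : Prufer p} {σ : ℕ →₀ ℤ} :
    IsCanonical p y σ ↔ (σ 0 = 0 ∧ y = Finsupp.linearCombination ℤ (eP p) σ) ∧
      ∀ n, 2 * (σ n).natAbs ≤ p - 1 := Iff.rfl

lemma eq_zero_of_linearCombination_eP_eq_zero (hp : p ≠ 0) {ρ : ℕ →₀ ℤ} (h0 : ρ 0 = 0)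
    (hb : ∀ n, (ρ n).natAbs < p) (h : Finsupp.linearCombination ℤ (eP p) ρ = 0) : ρ = 0 := by
  by_contra hne
  have hsupp : ρ.support.Nonempty := Finsupp.support_nonempty_iff.mpr hne
  set M := ρ.support.max' hsupp
  have hM : M ∈ ρ.support := ρ.support.max'_mem hsupp
  have hM0 : M ≠ 0 := fun h ↦ Finsupp.mem_support_iff.mp hM (h ▸ h0)
  -- multiplying by `p ^ (M - 1)` kills every term but the top one
  have htop : ρ M • eP p 1 = 0 := by
    have := congrArg (p ^ (M - 1) • ·) h
    simp only [smul_zero, Finsupp.linearCombination_apply, Finsupp.sum, Finset.smul_sum] at this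
    rw [Finset.sum_eq_single M, smul_comm, pow_smul_eP hp (Nat.sub_le M 1),
      Nat.sub_sub_self (Nat.one_le_iff_ne_zero.mpr hM0)] at this
    · exact this
    · intro k hk hkM
      have : k ≤ M - 1 := by have := ρ.support.le_max' k hk; omega
      rw [smul_comm, pow_smul_eP_of_le hp this, smul_zero]
    · exact fun h ↦ (h hM).elim
  have hdvd : (p : ℤ) ∣ ρ M := by simpa using (zsmul_eP_eq_zero_iff hp).mp htop
  have : ρ M = 0 := Int.eq_zero_of_abs_lt_dvd hdvd (by rw [Int.abs_eq_natAbs]; exact_mod_cast hb M)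
  exact Finsupp.mem_support_iff.mp hM this

lemma IsCanonical.unique (hp : p ≠ 0) {y : Prufer p} {σ σ' : ℕ →₀ ℤ} (hσ : IsCanonical p y σ)
    (hσ' : IsCanonical p y σ') : σ = σ' := by
  obtain ⟨⟨h0, hy⟩, hb⟩ := isCanonical_iff.mp hσ
  obtain ⟨⟨h0', hy'⟩, hb'⟩ := isCanonical_iff.mp hσ'
  refine sub_eq_zero.mp (eq_zero_of_linearCombination_eP_eq_zero hp ?_ (fun n ↦ ?_) ?_)
  · simp [h0, h0']
  · have := Int.natAbs_sub_le (σ n) (σ' n)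
    have := hb n
    have := hb' n
    simp only [Finsupp.coe_sub, Pi.sub_apply]
    omega
  · rw [map_sub, ← hy, ← hy', sub_self]

lemma IsCanonical.neg {y : Prufer p} {σ : ℕ →₀ ℤ} (hσ : IsCanonical p y σ) :
    IsCanonical p (-y) (-σ) := by
  obtain ⟨⟨h0, hy⟩, hb⟩ := isCanonical_iff.mp hσ
  exact isCanonical_iff.mpr ⟨⟨by simp [h0], by rw [map_neg, hy]⟩, fun n ↦ by simpa using hb n⟩

lemma IsCanonical.add {y y' : Prufer p} {σ σ' : ℕ →₀ ℤ} (hσ : IsCanonical p y σ)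
    (hσ' : IsCanonical p y' σ') (hd : Disjoint σ.support σ'.support) :
    IsCanonical p (y + y') (σ + σ') := by
  obtain ⟨⟨h0, hy⟩, hb⟩ := isCanonical_iff.mp hσ
  obtain ⟨⟨h0', hy'⟩, hb'⟩ := isCanonical_iff.mp hσ'
  refine isCanonical_iff.mpr ⟨⟨by simp [h0, h0'], by rw [map_add, hy, hy']⟩, fun n ↦ ?_⟩
  by_cases hn : n ∈ σ.support
  · have : σ' n = 0 := Finsupp.notMem_support_iff.mp (Finset.disjoint_left.mp hd hn)
    simpa [this] using hb n
  · simpa [Finsupp.notMem_support_iff.mp hn] using hb' n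

lemma isCanonical_single {m : ℕ} (hm : m ≠ 0) {c : ℤ} (hc : 2 * c.natAbs ≤ p - 1) :
    IsCanonical p (c • eP p m) (Finsupp.single m c) := by
  refine isCanonical_iff.mpr ⟨⟨Finsupp.single_eq_of_ne hm.symm, by simp⟩, fun n ↦ ?_⟩
  rw [Finsupp.single_apply]
  split_ifs <;> simp [hc]

lemma two_mul_natAbs_bmod_le (hodd : Odd p) (c : ℤ) : 2 * (c.bmod p).natAbs ≤ p - 1 := by
  have hp : 0 < p := hodd.pos
  have h1 := Int.le_bmod (x := c) hp
  have h2 := Int.bmod_le (x := c) hp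
  obtain ⟨k, rfl⟩ := hodd
  push_cast at h1 h2
  omega

/-- The balanced base-`p` expansion of `c`, placed in the positions `m - l, …, m`. -/
lemma exists_isCanonical_zsmul_eP (hp : 3 ≤ p) (hodd : Odd p) {l m : ℕ} (hlm : l < m) {c : ℤ}
    (hc : |c| ≤ (p : ℤ) ^ l) :
    ∃ ρ, IsCanonical p (c • eP p m) ρ ∧ ρ.support ⊆ Icc (m - l) m := by
  induction l generalizing m c with
  | zero =>
    refine ⟨_, isCanonical_single (by omega) ?_, Finsupp.support_single_subset.trans (by simp)⟩
    rw [pow_zero, Int.abs_eq_natAbs] at hc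
    omega
  | succ l ih =>
    set d := c.bmod p
    obtain ⟨q, hq⟩ : (p : ℤ) ∣ c - d := Int.dvd_self_sub_bmod
    have hd := two_mul_natAbs_bmod_le hodd c
    have hq_le : |q| ≤ (p : ℤ) ^ l := by
      have hp0 : (0 : ℤ) < p := by omega
      have : (p : ℤ) * |q| < p * (p ^ l + 1) := by
        rw [← abs_of_pos hp0, ← abs_mul, ← hq, abs_of_pos hp0]
        have := abs_sub c d
        rw [pow_succ] at hc
        zify [show 1 ≤ p by omega] at hd
        linarith
      have := lt_of_mul_lt_mul_left this hp0.le
      omega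
    obtain ⟨ρ, hρ, hρsupp⟩ := ih (m := m - 1) (by omega) hq_le
    have hsplit : c • eP p m = d • eP p m + q • eP p (m - 1) := by
      have hpe := pow_smul_eP (p := p) (by omega) (by omega : 1 ≤ m)
      rw [pow_one, ← natCast_zsmul] at hpe
      rw [← hpe, smul_smul, ← add_smul, mul_comm q, ← hq, add_sub_cancel]
    have hdisj : Disjoint (Finsupp.single m d).support ρ.support :=
      Finset.disjoint_of_subset_left Finsupp.support_single_subset
        (Finset.disjoint_singleton_left.mpr fun h ↦ by have := Finset.mem_Icc.mp (hρsupp h); omega)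
    refine ⟨_, hsplit ▸ (isCanonical_single (by omega) hd).add hρ hdisj, ?_⟩
    intro k hk
    rcases Finset.mem_union.mp (Finsupp.support_add hk) with hk | hk
    · have := Finset.mem_singleton.mp (Finsupp.support_single_subset hk)
      simp only [Finset.mem_Icc]
      omega
    · have := Finset.mem_Icc.mp (hρsupp hk)
      simp only [Finset.mem_Icc]
      omega

lemma zsmul_eP_ne_zero (hp : 1 < p) {c : ℤ} (hc0 : c ≠ 0) {l m : ℕ} (hlm : l < m)
    (hc : |c| ≤ (p : ℤ) ^ l) : c • eP p m ≠ 0 := by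
  intro h
  have hdvd := (zsmul_eP_eq_zero_iff (by omega)).mp h
  have := Int.le_of_dvd (abs_pos.mpr hc0) ((dvd_abs _ _).mpr hdvd)
  have := pow_lt_pow_right₀ (by exact_mod_cast hp : (1 : ℤ) < p) hlm
  omega

lemma IsCanonical.support_nonempty {y : Prufer p} {σ : ℕ →₀ ℤ} (hσ : IsCanonical p y σ)
    (hy : y ≠ 0) : σ.support.Nonempty := by
  rw [Finsupp.support_nonempty_iff]
  rintro rfl
  exact hy ((isCanonical_iff.mp hσ).1.2.trans (map_zero _))

lemma monotoneOn_of_gap {n l : ℕ → ℕ} {f : ℕ}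
    (hgap : ∀ j, j + 1 < f → n j + l (j + 1) < n (j + 1)) : MonotoneOn n (Set.Iio f) :=
  monotoneOn_of_le_add_one Set.ordConnected_Iio fun a _ _ ha ↦ by have := hgap a ha; omega

lemma add_lt_of_gap {n l : ℕ → ℕ} {f : ℕ} (hgap : ∀ j, j + 1 < f → n j + l (j + 1) < n (j + 1))
    {i j : ℕ} (hji : j < i) (hif : i < f) : n j + l i < n i := by
  have := monotoneOn_of_gap hgap (by simp; omega : j ∈ Set.Iio f)
    (by simp; omega : i - 1 ∈ Set.Iio f) (by omega : j ≤ i - 1)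
  have := hgap (i - 1) (by omega)
  rw [Nat.sub_add_cancel (by omega)] at this
  omega

lemma exists_isCanonical_sum_Ico (hp : 3 ≤ p) (hodd : Odd p) {ν : ℕ → ℤ} {n l : ℕ → ℕ}
    (hl : ∀ j, |ν j| ≤ (p : ℤ) ^ l j) {i f : ℕ} (hif : i < f) (hν : ∀ j ∈ Ico i f, ν j ≠ 0)
    (hfirst : l i < n i) (hgap : ∀ j, j + 1 < f → n j + l (j + 1) < n (j + 1)) :
    ∃ E, IsCanonical p (∑ j ∈ Ico i f, ν j • eP p (n j)) E ∧
      (∀ k ∈ E.support, n i - l i ≤ k ∧ k ≤ n (f - 1)) ∧ f - i ≤ E.support.card := by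
  have hblock : ∀ j, ν j ≠ 0 → l j < n j → ∃ ρ, IsCanonical p (ν j • eP p (n j)) ρ ∧
      ρ.support ⊆ Icc (n j - l j) (n j) ∧ 1 ≤ ρ.support.card := fun j hν0 hlt ↦ by
    obtain ⟨ρ, hρ, hsupp⟩ := exists_isCanonical_zsmul_eP hp hodd hlt (hl j)
    exact ⟨ρ, hρ, hsupp, Finset.card_pos.mpr
      (hρ.support_nonempty (zsmul_eP_ne_zero (by omega) hν0 hlt (hl j)))⟩
  induction f, hif using Nat.le_induction with
  | base =>
    obtain ⟨ρ, hρ, hsupp, hcard⟩ := hblock i (hν i (by simp)) hfirst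
    refine ⟨ρ, by simpa using hρ, fun k hk ↦ by simpa using hsupp hk, by simpa using hcard⟩
  | succ f hif ih =>
    obtain ⟨E, hE, hEsupp, hEcard⟩ := ih (fun j hj ↦ hν j (Finset.Ico_subset_Ico_right
      f.le_succ hj)) (fun j hj ↦ hgap j (by omega))
    have hgapf := add_lt_of_gap hgap (by omega : f - 1 < f) (by omega)
    have hgapi := add_lt_of_gap hgap (by omega : i < f) (by omega)
    obtain ⟨ρ, hρ, hsupp, hcard⟩ := hblock f (hν f (by simp; omega)) (by omega)
    have hdisj : Disjoint E.support ρ.support := Finset.disjoint_left.mpr fun k hkE hkρ ↦ by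
      have := hEsupp k hkE
      have := Finset.mem_Icc.mp (hsupp hkρ)
      omega
    refine ⟨E + ρ, ?_, fun k hk ↦ ?_, ?_⟩
    · rw [Finset.sum_Ico_succ_top (by omega)]
      exact hE.add hρ hdisj
    · rcases Finset.mem_union.mp (Finsupp.support_add hk) with hk | hk
      · have := hEsupp k hk
        simp only [Nat.add_sub_cancel]
        omega
      · have := Finset.mem_Icc.mp (hsupp hk)
        simp only [Nat.add_sub_cancel]
        omega
    · rw [Finsupp.support_add_eq hdisj, Finset.card_union_of_disjoint hdisj]
      omega

lemma IsCanonical.exists_pow_smul (hp : p ≠ 0) {y : Prufer p} {σ : ℕ →₀ ℤ}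
    (hσ : IsCanonical p y σ) (s : ℕ) :
    ∃ σ', IsCanonical p (p ^ s • y) σ' ∧ σ'.support.card = #{k ∈ σ.support | s < k} := by
  obtain ⟨⟨-, hy⟩, hb⟩ := isCanonical_iff.mp hσ
  set σs := σ.filter (s < ·)
  have hbij : Set.BijOn (· + s) ((· + s) ⁻¹' σs.support) σs.support := by
    refine ⟨fun k hk ↦ hk, (add_left_injective s).injOn, fun m hm ↦ ⟨m - s, ?_⟩⟩
    have : s < m := by
      by_contra h
      exact Finsupp.mem_support_iff.mp hm (Finsupp.filter_apply_neg _ _ h)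
    simp only [Set.mem_preimage, Nat.sub_add_cancel this.le]
    simpa using hm
  refine ⟨σs.comapDomain (· + s) hbij.injOn, isCanonical_iff.mpr ⟨⟨?_, ?_⟩, fun k ↦ ?_⟩, ?_⟩
  · simp [σs]
  · calc p ^ s • y = σs.sum fun m c ↦ c • eP p (m - s) := by
          rw [hy, Finsupp.linearCombination_apply, Finsupp.sum, Finset.smul_sum,
            Finsupp.sum_filter_index, Finsupp.support_filter, Finset.sum_filter]
          refine Finset.sum_congr rfl fun m _ ↦ ?_
          split_ifs with hsm
          · rw [smul_comm, pow_smul_eP hp hsm.le]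
          · rw [smul_comm, pow_smul_eP_of_le hp (not_lt.mp hsm), smul_zero]
        _ = _ := by
          rw [← Finsupp.sum_comapDomain _ _ _ hbij, Finsupp.linearCombination_apply]
          simp [Function.comp_def]
  · simp only [Finsupp.comapDomain_apply, σs, Finsupp.filter_apply]
    split_ifs <;> simp [hb]
  · change _ = #σs.support
    rw [Finsupp.comapDomain_support]
    have hbij' : Set.BijOn (· + s) ↑(σs.support.preimage (· + s) hbij.injOn) ↑σs.support := by
      rwa [Finset.coe_preimage]
    exact Finset.card_nbij _ hbij'.mapsTo hbij'.injOn hbij'.surjOn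

lemma pow_smul_sum_range_eq_sum_Ico (hp : p ≠ 0) {ν : ℕ → ℤ} {n : ℕ → ℕ} {i f k : ℕ}
    (hif : i ≤ f) (hn : ∀ j < i, n j ≤ k) :
    p ^ k • ∑ j ∈ range f, ν j • eP p (n j) = p ^ k • ∑ j ∈ Ico i f, ν j • eP p (n j) := by
  rw [range_eq_Ico, ← Finset.sum_Ico_consecutive _ (Nat.zero_le i) hif, smul_add,
    Finset.smul_sum (s := Ico 0 i), Finset.sum_eq_zero, zero_add]
  intro j hj
  rw [smul_comm, pow_smul_eP_of_le hp (hn j (Finset.mem_Ico.mp hj).2), smul_zero]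

lemma IsCanonical.card_filter_le_of_pow_smul_add_eq_zero (hp : p ≠ 0) {y z : Prufer p}
    {σ τ : ℕ →₀ ℤ} (hσ : IsCanonical p y σ) (hτ : IsCanonical p z τ) {s : ℕ}
    (h : p ^ s • (y + z) = 0) : #{k ∈ σ.support | s < k} ≤ #τ.support := by
  obtain ⟨σ', hσ', hσ'card⟩ := hσ.exists_pow_smul hp s
  obtain ⟨τ', hτ', hτ'card⟩ := hτ.exists_pow_smul hp s
  have hneg : p ^ s • y = -(p ^ s • z) := eq_neg_of_add_eq_zero_left (by rwa [smul_add] at h)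
  rw [← hσ'card, hσ'.unique hp (hneg ▸ hτ'.neg), Finsupp.support_neg, hτ'card]
  exact Finset.card_filter_le _ _

end

theorem stmt15_general (p : ℕ) (hp : p.Prime) (hodd : p ≠ 2) (f : ℕ) (hf : 0 < f)
    (ν : ℕ → ℤ) (n : ℕ → ℕ) (hν : ∀ i < f, ν i ≠ 0)
    (hgap : ∀ i, i + 1 < f → n i + Nat.clog p (ν (i + 1)).natAbs < n (i + 1))
    (y : Prufer p) (hy : y = ∑ i ∈ Finset.range f, ν i • eP p (n i))
    (σ : ℕ →₀ ℤ) (hσ : IsCanonical p y σ)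
    (z : Prufer p) (τ : ℕ →₀ ℤ) (hτ : IsCanonical p z τ)
    (hlt : τ.support.card < σ.support.card) :
    p ^ (n (f - τ.support.card - 1) -
        Nat.clog p (ν (f - τ.support.card - 1)).natAbs) ≤ addOrderOf (y + z) := by
  have hp3 : 3 ≤ p := by have := hp.two_le; omega
  have hp0 : p ≠ 0 := hp.ne_zero
  set t := τ.support.card
  set i := f - t - 1
  set N := n i - Nat.clog p (ν i).natAbs
  rcases Nat.eq_zero_or_pos N with hN | hN
  · rw [hN, pow_zero]
    exact Prufer.addOrderOf_pos hp0 _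
  have hl : ∀ j, |ν j| ≤ (p : ℤ) ^ Nat.clog p (ν j).natAbs := fun j ↦ by
    rw [Int.abs_eq_natAbs]
    exact_mod_cast Nat.le_pow_clog hp.one_lt _
  obtain ⟨E, hE, hEsupp, hEcard⟩ := exists_isCanonical_sum_Ico hp3 (hp.odd_of_ne_two hodd) hl
    (by omega : i < f) (fun j hj ↦ hν j (Finset.mem_Ico.mp hj).2) (by omega) hgap
  have htE : t < E.support.card := by
    rcases lt_or_ge t f with htf | htf
    · omega
    · rw [show i = 0 by omega, ← range_eq_Ico, ← hy] at hE
      rwa [hE.unique hp0 hσ]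
  have hlow : p ^ (N - 1) • y = p ^ (N - 1) • ∑ j ∈ Ico i f, ν j • eP p (n j) :=
    hy ▸ pow_smul_sum_range_eq_sum_Ico hp0 (by omega) fun j hj ↦ by
      have := add_lt_of_gap (l := fun j ↦ Nat.clog p (ν j).natAbs) hgap hj (by omega : i < f)
      omega
  refine Nat.sub_add_cancel hN ▸ Prufer.pow_succ_le_addOrderOf hp fun h0 ↦ ?_
  have := hE.card_filter_le_of_pow_smul_add_eq_zero hp0 hτ (s := N - 1)
    (by rwa [smul_add, ← hlow, ← smul_add])
  rw [Finset.filter_true_of_mem fun k hk ↦ by have := hEsupp k hk; omega] at this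
  omega

/-- With `y = ν₁ e_{n₁} + ⋯ + ν_f e_{n_f}` as in the gap condition, if `λ(z) < λ(y)` then
`o(y + z) ≥ p^{n_{f - λ(z)} - l_{f - λ(z)}}`. -/
theorem stmt15 (p : ℕ) (hp : p.Prime) (hodd : p ≠ 2) (f : ℕ) (hf : 0 < f)
    (ν : ℕ → ℤ) (n : ℕ → ℕ) (hν : ∀ i < f, ν i ≠ 0) (hpos : 0 < n 0)
    (hmono : ∀ i, i + 1 < f → n i < n (i + 1))
    (hgap : ∀ i, i + 1 < f → n i + Nat.clog p (ν (i + 1)).natAbs < n (i + 1))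
    (y : Prufer p) (hy : y = ∑ i ∈ Finset.range f, ν i • eP p (n i))
    (σ : ℕ →₀ ℤ) (hσ : IsCanonical p y σ)
    (z : Prufer p) (τ : ℕ →₀ ℤ) (hτ : IsCanonical p z τ)
    (hlt : τ.support.card < σ.support.card) :
    p ^ (n (f - τ.support.card - 1) -
        Nat.clog p (ν (f - τ.support.card - 1)).natAbs) ≤ addOrderOf (y + z) :=
  stmt15_general p hp hodd f hf ν n hν hgap y hy σ hσ z τ hτ hlt
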